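/- Soundness of G(FOC+J): if the sequent Γ ⇒ Δ is derivable in the sequent calculus G(FOC+J), then the semantic consequence Γ ⊨ Δ holds, i.e., for every Kripke model, world w, and assignment, if all formulas in Γ are satisfied at w then some formula in Δ is satisfied at w. -/

import Mathlib

/-- Terms: variables (named by naturals) and constant symbols. -/
inductive Tm : Type
| var : ℕ → Tm
| const : ℕ → Tm
deriving DecidableEq

/-- Formulas of the combined language: atoms, ⊥, ∧, ∨, intuitionistic and
classical implication, intuitionistic and classical universal quantifier,
and the existential quantifier. -/
inductive Fm : Type
| atom : ℕ → List Tm → Fm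
| bot : Fm
| and : Fm → Fm → Fm
| or : Fm → Fm → Fm
| impI : Fm → Fm → Fm
| impC : Fm → Fm → Fm
| allI : ℕ → Fm → Fm
| allC : ℕ → Fm → Fm
| ex : ℕ → Fm → Fm
deriving DecidableEq

def Fm.top : Fm := .impI .bot .bot
def Fm.negC (A : Fm) : Fm := .impC A .bot
def Fm.negI (A : Fm) : Fm := .impI A .bot

def Tm.fv : Tm → Set ℕ
| .var x => {x}
| .const _ => ∅

/-- Free variables of a formula. -/
def Fm.fv : Fm → Set ℕ
| .atom _ ts => {x | ∃ t ∈ ts, x ∈ t.fv}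
| .bot => ∅
| .and A B => A.fv ∪ B.fv
| .or A B => A.fv ∪ B.fv
| .impI A B => A.fv ∪ B.fv
| .impC A B => A.fv ∪ B.fv
| .allI x A => A.fv \ {x}
| .allC x A => A.fv \ {x}
| .ex x A => A.fv \ {x}

/-- Bound variables of a formula. -/
def Fm.bv : Fm → Set ℕ
| .atom _ _ => ∅
| .bot => ∅
| .and A B => A.bv ∪ B.bv
| .or A B => A.bv ∪ B.bv
| .impI A B => A.bv ∪ B.bv
| .impC A B => A.bv ∪ B.bv
| .allI x A => insert x A.bv
| .allC x A => insert x A.bv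
| .ex x A => insert x A.bv

/-- All variables (free and bound) of a formula. -/
def Fm.vars : Fm → Set ℕ
| .atom _ ts => {x | ∃ t ∈ ts, x ∈ t.fv}
| .bot => ∅
| .and A B => A.vars ∪ B.vars
| .or A B => A.vars ∪ B.vars
| .impI A B => A.vars ∪ B.vars
| .impC A B => A.vars ∪ B.vars
| .allI x A => insert x A.vars
| .allC x A => insert x A.vars
| .ex x A => insert x A.vars

def Tm.subst (x : ℕ) (u : Tm) : Tm → Tm
| .var y => if y = x then u else .var y
| .const c => .const c

/-- Substitution of term `u` for variable `x` (under the standing assumption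
that bound and free variables are disjoint, this is clash-avoiding). -/
def Fm.subst : Fm → ℕ → Tm → Fm
| .atom P ts, x, u => .atom P (ts.map (Tm.subst x u))
| .bot, _, _ => .bot
| .and A B, x, u => .and (A.subst x u) (B.subst x u)
| .or A B, x, u => .or (A.subst x u) (B.subst x u)
| .impI A B, x, u => .impI (A.subst x u) (B.subst x u)
| .impC A B, x, u => .impC (A.subst x u) (B.subst x u)
| .allI y A, x, u => .allI y (if y = x then A else A.subst x u)
| .allC y A, x, u => .allC y (if y = x then A else A.subst x u)
| .ex y A, x, u => .ex y (if y = x then A else A.subst x u)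

/-- Persistent formulas: atoms, →ᵢ-formulas and ∀ᵢ-formulas. -/
def Fm.Persistent : Fm → Prop
| .atom _ _ => True
| .impI _ _ => True
| .allI _ _ => True
| _ => False

/-- Purely intuitionistic formulas (no →_c, no ∀_c). -/
def Fm.IsJ : Fm → Prop
| .atom _ _ => True
| .bot => True
| .and A B => A.IsJ ∧ B.IsJ
| .or A B => A.IsJ ∧ B.IsJ
| .impI A B => A.IsJ ∧ B.IsJ
| .impC _ _ => False
| .allI _ A => A.IsJ
| .allC _ _ => False
| .ex _ A => A.IsJ

/-- Purely classical formulas (no →ᵢ, no ∀ᵢ). -/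
def Fm.IsC : Fm → Prop
| .atom _ _ => True
| .bot => True
| .and A B => A.IsC ∧ B.IsC
| .or A B => A.IsC ∧ B.IsC
| .impI _ _ => False
| .impC A B => A.IsC ∧ B.IsC
| .allI _ _ => False
| .allC _ A => A.IsC
| .ex _ A => A.IsC

/-- A raw Kripke structure for the combined first-order language. -/
structure KModel (U : Type) where
  W : Type
  R : W → W → Prop
  D : W → Set U
  cI : ℕ → U
  V : ℕ → W → Set (List U)

/-- The conditions making a raw structure an intuitionistic Kripke model:
`R` is a preorder, domains are nonempty, monotone, with nonempty
intersection, constants are rigid (interpreted in every domain), and the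
predicate valuation is monotone (hereditary) along `R`. -/
structure KModel.IsKripke {U : Type} (M : KModel U) : Prop where
  wNonempty : Nonempty M.W
  refl : ∀ w, M.R w w
  trans : ∀ {w v u}, M.R w v → M.R v u → M.R w u
  dNonempty : ∀ w, (M.D w).Nonempty
  dMono : ∀ {w v}, M.R w v → M.D w ⊆ M.D v
  dInter : (⋂ w, M.D w).Nonempty
  cMem : ∀ c w, M.cI c ∈ M.D w
  vMono : ∀ P {w v}, M.R w v → M.V P w ⊆ M.V P v

def Tm.val {U : Type} (M : KModel U) (g : ℕ → U) : Tm → U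
| .var x => g x
| .const c => M.cI c

/-- Satisfaction of a formula at a world under an assignment. -/
def Fm.Sat {U : Type} (M : KModel U) : Fm → M.W → (ℕ → U) → Prop
| .atom P ts, w, g => ts.map (Tm.val M g) ∈ M.V P w
| .bot, _, _ => False
| .and A B, w, g => A.Sat M w g ∧ B.Sat M w g
| .or A B, w, g => A.Sat M w g ∨ B.Sat M w g
| .impI A B, w, g => ∀ v, M.R w v → A.Sat M v g → B.Sat M v g
| .impC A B, w, g => A.Sat M w g → B.Sat M w g
| .allI x A, w, g => ∀ v, M.R w v → ∀ d ∈ M.D v, A.Sat M v (Function.update g x d)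
| .allC x A, w, g => ∀ d ∈ M.D w, A.Sat M w (Function.update g x d)
| .ex x A, w, g => ∃ d ∈ M.D w, A.Sat M w (Function.update g x d)

/-- Multi-succedent semantic consequence: at every world of every Kripke
model, under any assignment into the domain, if all of `Γ` holds then some
member of `Δ` holds. -/
def Conseq (Γ Δ : List Fm) : Prop :=
  ∀ (U : Type) (M : KModel U), M.IsKripke → ∀ (w : M.W) (g : ℕ → U),
    (∀ x, g x ∈ M.D w) → (∀ A ∈ Γ, A.Sat M w g) → ∃ B ∈ Δ, B.Sat M w g

/-- The sequent calculus G(FOC+J). -/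
inductive Der : List Fm → List Fm → Prop
| id (A : Fm) : Der [A] [A]
| botL : Der [.bot] []
| perm {Γ Γ' Δ Δ'} : Γ.Perm Γ' → Δ.Perm Δ' → Der Γ Δ → Der Γ' Δ'
| wL {Γ Δ} (A) : Der Γ Δ → Der (A :: Γ) Δ
| wR {Γ Δ} (A) : Der Γ Δ → Der Γ (A :: Δ)
| cL {Γ Δ A} : Der (A :: A :: Γ) Δ → Der (A :: Γ) Δ
| cR {Γ Δ A} : Der Γ (A :: A :: Δ) → Der Γ (A :: Δ)
| cut {Γ Δ P S A} : Der Γ (A :: Δ) → Der (A :: P) S → Der (Γ ++ P) (Δ ++ S)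
| impIR {Θ A B} : (∀ C ∈ Θ, Fm.Persistent C) →
    Der (A :: Θ) [B] → Der Θ [.impI A B]
| impIL {Γ₁ Γ₂ Δ₁ Δ₂ A B} : Der Γ₁ (A :: Δ₁) → Der (B :: Γ₂) Δ₂ →
    Der (.impI A B :: (Γ₁ ++ Γ₂)) (Δ₁ ++ Δ₂)
| impCR {Γ Δ A B} : Der (A :: Γ) (B :: Δ) → Der Γ (.impC A B :: Δ)
| impCL {Γ₁ Γ₂ Δ₁ Δ₂ A B} : Der Γ₁ (A :: Δ₁) → Der (B :: Γ₂) Δ₂ →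
    Der (.impC A B :: (Γ₁ ++ Γ₂)) (Δ₁ ++ Δ₂)
| andR {Γ Δ A B} : Der Γ (A :: Δ) → Der Γ (B :: Δ) → Der Γ (.and A B :: Δ)
| andL1 {Γ Δ A B} : Der (A :: Γ) Δ → Der (.and A B :: Γ) Δ
| andL2 {Γ Δ A B} : Der (B :: Γ) Δ → Der (.and A B :: Γ) Δ
| orR1 {Γ Δ A B} : Der Γ (A :: Δ) → Der Γ (.or A B :: Δ)
| orR2 {Γ Δ A B} : Der Γ (B :: Δ) → Der Γ (.or A B :: Δ)
| orL {Γ Δ A B} : Der (A :: Γ) Δ → Der (B :: Γ) Δ → Der (.or A B :: Γ) Δ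
| allIR {Θ x z A} : (∀ C ∈ Θ, Fm.Persistent C) →
    (∀ C ∈ Θ, z ∉ Fm.fv C) → z ∉ Fm.fv (.allI x A) → z ∉ Fm.bv A →
    Der Θ [A.subst x (.var z)] → Der Θ [.allI x A]
| allIL {Γ Δ x A} (t : Tm) : (∀ y ∈ t.fv, y ∉ Fm.bv A) →
    Der (A.subst x t :: Γ) Δ → Der (.allI x A :: Γ) Δ
| allCR {Γ Δ x z A} : (∀ C ∈ Γ, z ∉ Fm.fv C) → (∀ C ∈ Δ, z ∉ Fm.fv C) →
    z ∉ Fm.fv (.allC x A) → z ∉ Fm.bv A →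
    Der Γ (A.subst x (.var z) :: Δ) → Der Γ (.allC x A :: Δ)
| allCL {Γ Δ x A} (t : Tm) : (∀ y ∈ t.fv, y ∉ Fm.bv A) →
    Der (A.subst x t :: Γ) Δ → Der (.allC x A :: Γ) Δ
| exR {Γ Δ x A} (t : Tm) : (∀ y ∈ t.fv, y ∉ Fm.bv A) →
    Der Γ (A.subst x t :: Δ) → Der Γ (.ex x A :: Δ)
| exL {Γ Δ x z A} : (∀ C ∈ Γ, z ∉ Fm.fv C) → (∀ C ∈ Δ, z ∉ Fm.fv C) →
    z ∉ Fm.fv (.ex x A) → z ∉ Fm.bv A →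
    Der (A.subst x (.var z) :: Γ) Δ → Der (.ex x A :: Γ) Δ

/-! Every rule preserves validity. The only rules whose premises are evaluated away from
the current world are (⇒→ᵢ) and (⇒∀ᵢ); they are sound because their contexts are persistent,
hence remain true at every `R`-successor. Eigenvariables are handled by reinterpreting the fresh
variable `z` as the witness, which leaves every context formula unchanged since `z` is not free
in it. -/

open Function

theorem forall_update_mem {α β : Type*} [DecidableEq α] {s : Set β} {g : α → β} {d : β}
    (hg : ∀ y, g y ∈ s) (hd : d ∈ s) (z : α) : ∀ y, update g z d y ∈ s :=
  (forall_update_iff g fun _ e => e ∈ s).2 ⟨hd, fun y _ => hg y⟩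

theorem Set.EqOn.update_of_diff {α β : Type*} [DecidableEq α] {f g : α → β} {s : Set α}
    {y : α} (h : Set.EqOn f g (s \ {y})) (d : β) : Set.EqOn (update f y d) (update g y d) s := by
  intro x hx
  obtain rfl | hxy := eq_or_ne x y
  · simp
  · simp only [update_of_ne hxy]
    exact h ⟨hx, hxy⟩

namespace Tm

variable {U : Type} (M : KModel U)

theorem val_congr {g g' : ℕ → U} {t : Tm} (h : Set.EqOn g g' t.fv) :
    t.val M g = t.val M g' := by
  cases t with
  | var x => exact h rfl
  | const c => rfl

theorem val_update_of_not_mem_fv {t : Tm} {y : ℕ} (hy : y ∉ t.fv) (g : ℕ → U) (d : U) :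
    t.val M (update g y d) = t.val M g :=
  val_congr M fun _ hx => update_of_ne (ne_of_mem_of_not_mem hx hy) _ _

theorem val_subst (x : ℕ) (u t : Tm) (g : ℕ → U) :
    (Tm.subst x u t).val M g = t.val M (update g x (u.val M g)) := by
  cases t with
  | var y => by_cases h : y = x <;> simp [Tm.subst, Tm.val, h]
  | const c => rfl

variable {M}

theorem val_mem (hM : M.IsKripke) {g : ℕ → U} {w : M.W} (hg : ∀ x, g x ∈ M.D w) (t : Tm) :
    t.val M g ∈ M.D w := by
  cases t with
  | var x => exact hg x
  | const c => exact hM.cMem c w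

end Tm

namespace Fm

variable {U : Type} (M : KModel U)

theorem sat_congr (A : Fm) {g g' : ℕ → U} (h : Set.EqOn g g' A.fv) (w : M.W) :
    A.Sat M w g ↔ A.Sat M w g' := by
  induction A generalizing g g' w with
  | atom P ts =>
    simp only [Fm.Sat, List.map_congr_left fun t ht => Tm.val_congr M fun x hx => h ⟨t, ht, hx⟩]
  | bot => rfl
  | and A B ihA ihB =>
    exact and_congr (ihA (h.mono Set.subset_union_left) w) (ihB (h.mono Set.subset_union_right) w)
  | or A B ihA ihB =>
    exact or_congr (ihA (h.mono Set.subset_union_left) w) (ihB (h.mono Set.subset_union_right) w)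
  | impI A B ihA ihB =>
    exact forall₂_congr fun v _ =>
      imp_congr (ihA (h.mono Set.subset_union_left) v) (ihB (h.mono Set.subset_union_right) v)
  | impC A B ihA ihB =>
    exact imp_congr (ihA (h.mono Set.subset_union_left) w) (ihB (h.mono Set.subset_union_right) w)
  | allI y A ih =>
    exact forall₂_congr fun v _ => forall₂_congr fun d _ => ih (h.update_of_diff d) v
  | allC y A ih => exact forall₂_congr fun d _ => ih (h.update_of_diff d) w
  | ex y A ih => exact exists_congr fun d => and_congr_right fun _ => ih (h.update_of_diff d) w

theorem sat_update_of_not_mem_fv {C : Fm} {z : ℕ} (hz : z ∉ C.fv) (w : M.W) (g : ℕ → U)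
    (d : U) : C.Sat M w (update g z d) ↔ C.Sat M w g :=
  C.sat_congr M (fun _ hy => update_of_ne (ne_of_mem_of_not_mem hy hz) _ _) w

/-- `Fm.subst` does not rename bound variables; the hypothesis on `u` rules out capture. -/
theorem sat_subst (A : Fm) {x : ℕ} {u : Tm} (hu : ∀ y ∈ u.fv, y ∉ A.bv) (w : M.W) (g : ℕ → U) :
    (A.subst x u).Sat M w g ↔ A.Sat M w (update g x (u.val M g)) := by
  induction A generalizing w g with
  | atom P ts => simp [Fm.subst, Fm.Sat, Function.comp_def, Tm.val_subst]
  | bot => rfl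
  | and A B ihA ihB =>
    exact and_congr (ihA (fun y hy hb => hu y hy (Or.inl hb)) w g)
      (ihB (fun y hy hb => hu y hy (Or.inr hb)) w g)
  | or A B ihA ihB =>
    exact or_congr (ihA (fun y hy hb => hu y hy (Or.inl hb)) w g)
      (ihB (fun y hy hb => hu y hy (Or.inr hb)) w g)
  | impI A B ihA ihB =>
    exact forall₂_congr fun v _ => imp_congr (ihA (fun y hy hb => hu y hy (Or.inl hb)) v g)
      (ihB (fun y hy hb => hu y hy (Or.inr hb)) v g)
  | impC A B ihA ihB =>
    exact imp_congr (ihA (fun y hy hb => hu y hy (Or.inl hb)) w g)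
      (ihB (fun y hy hb => hu y hy (Or.inr hb)) w g)
  | allI y A ih | allC y A ih | ex y A ih =>
    obtain rfl | hyx := eq_or_ne y x
    · simp [Fm.subst, Fm.Sat, update_idem]
    have hyu : y ∉ u.fv := fun hy => hu y hy (Set.mem_insert y _)
    have ih := ih (fun z hz hb => hu z hz (Set.mem_insert_of_mem y hb))
    simp only [Fm.subst, if_neg hyx, Fm.Sat, ih, Tm.val_update_of_not_mem_fv M hyu,
      update_comm hyx]

theorem sat_subst_var_update {A : Fm} {x z : ℕ} (hfv : z ∉ A.fv \ {x}) (hbv : z ∉ A.bv)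
    (w : M.W) (g : ℕ → U) (d : U) :
    (A.subst x (.var z)).Sat M w (update g z d) ↔ A.Sat M w (update g x d) := by
  rw [A.sat_subst M (by simpa [Tm.fv] using hbv)]
  refine A.sat_congr M (fun y hy => ?_) w
  obtain rfl | hyx := eq_or_ne y x
  · simp [Tm.val]
  · have hyz : y ≠ z := fun h => hfv ⟨h ▸ hy, h ▸ hyx⟩
    simp [update_of_ne hyx, update_of_ne hyz]

variable {M}

theorem Persistent.sat_mono {A : Fm} (hA : A.Persistent) (hM : M.IsKripke) {w v : M.W}
    (hwv : M.R w v) {g : ℕ → U} (h : A.Sat M w g) : A.Sat M v g := by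
  cases A with
  | atom P ts => exact hM.vMono P hwv h
  | impI A B => exact fun u hu => h u (hM.trans hwv hu)
  | allI x A => exact fun u hu => h u (hM.trans hwv hu)
  | bot | and _ _ | or _ _ | impC _ _ | allC _ _ | ex _ _ => exact hA.elim

end Fm

namespace Conseq

variable {Γ Γ' Γ₁ Γ₂ Δ Δ' Δ₁ Δ₂ Θ P S : List Fm} {A B : Fm} {x z : ℕ}

theorem of_sat_imp (h : ∀ (U : Type) (M : KModel U), M.IsKripke → ∀ (w : M.W) (g : ℕ → U),
    (∀ x, g x ∈ M.D w) → A.Sat M w g → B.Sat M w g) : Conseq [A] [B] :=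
  fun U M hM w g hg hA =>
    ⟨B, List.mem_singleton_self B, h U M hM w g hg (hA A (List.mem_singleton_self A))⟩

theorem id (A : Fm) : Conseq [A] [A] := of_sat_imp fun _ _ _ _ _ _ => _root_.id

theorem botL : Conseq [.bot] [] := fun _ _ _ _ _ _ h => (h .bot (List.mem_singleton_self _)).elim

theorem mono (hΓ : Γ ⊆ Γ') (hΔ : Δ ⊆ Δ') (h : Conseq Γ Δ) : Conseq Γ' Δ' :=
  fun U M hM w g hg hΓ' =>
    let ⟨B, hB, hBs⟩ := h U M hM w g hg fun A hA => hΓ' A (hΓ hA)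
    ⟨B, hΔ hB, hBs⟩

theorem cut (h₁ : Conseq Γ (A :: Δ)) (h₂ : Conseq (A :: P) S) :
    Conseq (Γ ++ P) (Δ ++ S) := by
  intro U M hM w g hg hΓP
  rw [List.forall_mem_append] at hΓP
  obtain hA | ⟨B, hB, hBs⟩ := List.exists_mem_cons_iff _ _ _ |>.1 (h₁ U M hM w g hg hΓP.1)
  · obtain ⟨C, hC, hCs⟩ := h₂ U M hM w g hg (List.forall_mem_cons.2 ⟨hA, hΓP.2⟩)
    exact ⟨C, List.mem_append_right _ hC, hCs⟩
  · exact ⟨B, List.mem_append_left _ hB, hBs⟩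

theorem replace_left (hBA : Conseq [B] [A]) (h : Conseq (A :: Γ) Δ) : Conseq (B :: Γ) Δ :=
  hBA.cut h

theorem replace_right (hAB : Conseq [A] [B]) (h : Conseq Γ (A :: Δ)) : Conseq Γ (B :: Δ) :=
  (h.cut hAB).mono (by simp) (by simp)

theorem impCR (h : Conseq (A :: Γ) (B :: Δ)) : Conseq Γ (.impC A B :: Δ) := by
  intro U M hM w g hg hΓ
  by_cases hA : A.Sat M w g
  · obtain hB | hΔ := List.exists_mem_cons_iff _ _ _ |>.1
      (h U M hM w g hg (List.forall_mem_cons.2 ⟨hA, hΓ⟩))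
    · exact ⟨_, List.mem_cons_self, fun _ => hB⟩
    · exact List.exists_mem_cons_of_exists hΔ
  · exact ⟨_, List.mem_cons_self, fun h => absurd h hA⟩

theorem impCL (h₁ : Conseq Γ₁ (A :: Δ₁)) (h₂ : Conseq (B :: Γ₂) Δ₂) :
    Conseq (.impC A B :: (Γ₁ ++ Γ₂)) (Δ₁ ++ Δ₂) := by
  intro U M hM w g hg hΓ
  simp only [List.forall_mem_cons, List.forall_mem_append] at hΓ
  obtain ⟨hAB, hΓ₁, hΓ₂⟩ := hΓ
  obtain hA | ⟨C, hC, hCs⟩ := List.exists_mem_cons_iff _ _ _ |>.1 (h₁ U M hM w g hg hΓ₁)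
  · obtain ⟨C, hC, hCs⟩ := h₂ U M hM w g hg (List.forall_mem_cons.2 ⟨hAB hA, hΓ₂⟩)
    exact ⟨C, List.mem_append_right _ hC, hCs⟩
  · exact ⟨C, List.mem_append_left _ hC, hCs⟩

theorem impI_entails_impC : Conseq [.impI A B] [.impC A B] :=
  of_sat_imp fun _ _ hM w _ _ h => h w (hM.refl w)

theorem impIR (hΘ : ∀ C ∈ Θ, C.Persistent) (h : Conseq (A :: Θ) [B]) :
    Conseq Θ [.impI A B] := by
  intro U M hM w g hg hΘw
  refine ⟨_, List.mem_singleton_self _, fun v hwv hA => ?_⟩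
  have hΘv : ∀ C ∈ Θ, C.Sat M v g := fun C hC => (hΘ C hC).sat_mono hM hwv (hΘw C hC)
  obtain ⟨C, hC, hCs⟩ :=
    h U M hM v g (fun y => hM.dMono hwv (hg y)) (List.forall_mem_cons.2 ⟨hA, hΘv⟩)
  exact List.mem_singleton.1 hC ▸ hCs

theorem andR (hA : Conseq Γ (A :: Δ)) (hB : Conseq Γ (B :: Δ)) :
    Conseq Γ (.and A B :: Δ) := by
  intro U M hM w g hg hΓ
  obtain hA | hΔ := List.exists_mem_cons_iff _ _ _ |>.1 (hA U M hM w g hg hΓ)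
  · obtain hB | hΔ := List.exists_mem_cons_iff _ _ _ |>.1 (hB U M hM w g hg hΓ)
    · exact ⟨_, List.mem_cons_self, hA, hB⟩
    · exact List.exists_mem_cons_of_exists hΔ
  · exact List.exists_mem_cons_of_exists hΔ

theorem orL (hA : Conseq (A :: Γ) Δ) (hB : Conseq (B :: Γ) Δ) : Conseq (.or A B :: Γ) Δ := by
  intro U M hM w g hg hΓ
  obtain ⟨hA' | hB', hΓ⟩ := List.forall_mem_cons.1 hΓ
  · exact hA U M hM w g hg (List.forall_mem_cons.2 ⟨hA', hΓ⟩)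
  · exact hB U M hM w g hg (List.forall_mem_cons.2 ⟨hB', hΓ⟩)

theorem and_entails_left : Conseq [.and A B] [A] := of_sat_imp fun _ _ _ _ _ _ h => h.1

theorem and_entails_right : Conseq [.and A B] [B] := of_sat_imp fun _ _ _ _ _ _ h => h.2

theorem entails_or_left : Conseq [A] [.or A B] := of_sat_imp fun _ _ _ _ _ _ => Or.inl

theorem entails_or_right : Conseq [B] [.or A B] := of_sat_imp fun _ _ _ _ _ _ => Or.inr

theorem allI_entails_allC : Conseq [.allI x A] [.allC x A] :=
  of_sat_imp fun _ _ hM w _ _ h => h w (hM.refl w)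

theorem allC_entails_subst (t : Tm) (ht : ∀ y ∈ t.fv, y ∉ A.bv) :
    Conseq [.allC x A] [A.subst x t] :=
  of_sat_imp fun _ M hM w g hg h => (A.sat_subst M ht w g).2 (h _ (t.val_mem hM hg))

theorem subst_entails_ex (t : Tm) (ht : ∀ y ∈ t.fv, y ∉ A.bv) :
    Conseq [A.subst x t] [.ex x A] :=
  of_sat_imp fun _ M hM w g hg h => ⟨_, t.val_mem hM hg, (A.sat_subst M ht w g).1 h⟩

theorem allIR (hΘ : ∀ C ∈ Θ, C.Persistent) (hΘz : ∀ C ∈ Θ, z ∉ C.fv)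
    (hz : z ∉ (Fm.allI x A).fv) (hzA : z ∉ A.bv) (h : Conseq Θ [A.subst x (.var z)]) :
    Conseq Θ [.allI x A] := by
  intro U M hM w g hg hΘw
  refine ⟨_, List.mem_singleton_self _, fun v hwv d hd => ?_⟩
  have hΘv : ∀ C ∈ Θ, C.Sat M v (update g z d) := fun C hC =>
    (C.sat_update_of_not_mem_fv M (hΘz C hC) v g d).2 ((hΘ C hC).sat_mono hM hwv (hΘw C hC))
  obtain ⟨C, hC, hCs⟩ :=
    h U M hM v _ (forall_update_mem (fun y => hM.dMono hwv (hg y)) hd z) hΘv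
  rwa [List.mem_singleton.1 hC, A.sat_subst_var_update M hz hzA] at hCs

theorem allCR (hΓz : ∀ C ∈ Γ, z ∉ C.fv) (hΔz : ∀ C ∈ Δ, z ∉ C.fv)
    (hz : z ∉ (Fm.allC x A).fv) (hzA : z ∉ A.bv) (h : Conseq Γ (A.subst x (.var z) :: Δ)) :
    Conseq Γ (.allC x A :: Δ) := by
  intro U M hM w g hg hΓ
  by_cases hΔ : ∃ B ∈ Δ, B.Sat M w g
  · exact List.exists_mem_cons_of_exists hΔ
  refine ⟨_, List.mem_cons_self, fun d hd => ?_⟩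
  have hΓ' : ∀ C ∈ Γ, C.Sat M w (update g z d) := fun C hC =>
    (C.sat_update_of_not_mem_fv M (hΓz C hC) w g d).2 (hΓ C hC)
  obtain hA | ⟨C, hC, hCs⟩ := List.exists_mem_cons_iff _ _ _ |>.1
    (h U M hM w _ (forall_update_mem hg hd z) hΓ')
  · exact (A.sat_subst_var_update M hz hzA w g d).1 hA
  · exact absurd ⟨C, hC, (C.sat_update_of_not_mem_fv M (hΔz C hC) w g d).1 hCs⟩ hΔ

theorem exL (hΓz : ∀ C ∈ Γ, z ∉ C.fv) (hΔz : ∀ C ∈ Δ, z ∉ C.fv)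
    (hz : z ∉ (Fm.ex x A).fv) (hzA : z ∉ A.bv) (h : Conseq (A.subst x (.var z) :: Γ) Δ) :
    Conseq (.ex x A :: Γ) Δ := by
  intro U M hM w g hg hΓ
  obtain ⟨⟨d, hd, hA⟩, hΓ⟩ := List.forall_mem_cons.1 hΓ
  have hΓ' : ∀ C ∈ A.subst x (.var z) :: Γ, C.Sat M w (update g z d) :=
    List.forall_mem_cons.2 ⟨(A.sat_subst_var_update M hz hzA w g d).2 hA, fun C hC =>
      (C.sat_update_of_not_mem_fv M (hΓz C hC) w g d).2 (hΓ C hC)⟩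
  obtain ⟨C, hC, hCs⟩ := h U M hM w _ (forall_update_mem hg hd z) hΓ'
  exact ⟨C, hC, (C.sat_update_of_not_mem_fv M (hΔz C hC) w g d).1 hCs⟩

end Conseq

/-- soundness of G(FOC+J): every derivable sequent is a
semantic consequence. -/
theorem soundness {Γ Δ : List Fm} (h : Der Γ Δ) : Conseq Γ Δ := by
  induction h with
  | id A => exact .id A
  | botL => exact .botL
  | perm hΓ hΔ _ ih => exact ih.mono hΓ.subset hΔ.subset
  | wL A _ ih => exact ih.mono (List.subset_cons_self A _) (List.Subset.refl _)
  | wR A _ ih => exact ih.mono (List.Subset.refl _) (List.subset_cons_self A _)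
  | cL _ ih => exact ih.mono (by simp) (List.Subset.refl _)
  | cR _ ih => exact ih.mono (List.Subset.refl _) (by simp)
  | cut _ _ ih₁ ih₂ => exact ih₁.cut ih₂
  | impIR hΘ _ ih => exact ih.impIR hΘ
  | impIL _ _ ih₁ ih₂ => exact .replace_left .impI_entails_impC (ih₁.impCL ih₂)
  | impCR _ ih => exact ih.impCR
  | impCL _ _ ih₁ ih₂ => exact ih₁.impCL ih₂
  | andR _ _ ih₁ ih₂ => exact ih₁.andR ih₂
  | andL1 _ ih => exact .replace_left .and_entails_left ih
  | andL2 _ ih => exact .replace_left .and_entails_right ih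
  | orR1 _ ih => exact .replace_right .entails_or_left ih
  | orR2 _ ih => exact .replace_right .entails_or_right ih
  | orL _ _ ih₁ ih₂ => exact ih₁.orL ih₂
  | allIR hΘ hΘz hz hzA _ ih => exact ih.allIR hΘ hΘz hz hzA
  | allIL t ht _ ih =>
    exact .replace_left .allI_entails_allC (.replace_left (.allC_entails_subst t ht) ih)
  | allCR hΓz hΔz hz hzA _ ih => exact ih.allCR hΓz hΔz hz hzA
  | allCL t ht _ ih => exact .replace_left (.allC_entails_subst t ht) ih
  | exR t ht _ ih => exact .replace_right (.subst_entails_ex t ht) ih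
  | exL hΓz hΔz hz hzA _ ih => exact ih.exL hΓz hΔz hz hzA
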